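/- For a single partition λ with generic q, t (e.g. q, t algebraically independent transcendentals), the map λ ↦ ε_λ = 1 + (t−1) Σ_{k=1}^{ℓ(λ)} (q^{λ_k} − 1) t^{−k} is injective on the set of all partitions. -/

import Mathlib

/-!
Multiplying `ε_λ - 1` by `t ^ N / (t - 1)`, for any `N ≥ ℓ(λ)`, leaves
`∑_{k < N} (q ^ λ_k - 1) t ^ (N - 1 - k)`, so `ε_λ = ε_μ` forces
`∑_{k < N} q ^ λ_k t ^ (N - 1 - k) = ∑_{k < N} q ^ μ_k t ^ (N - 1 - k)`. By algebraic independence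
this is an identity of polynomials in two variables, and since the exponents of `t` are pairwise
distinct, comparing the coefficients of `q ^ λ_k t ^ (N - 1 - k)` gives `λ_k = μ_k`.
-/

structure Partition' where
  parts : ℕ →₀ ℕ
  antitone : ∀ ⦃i j : ℕ⦄, i ≤ j → parts j ≤ parts i

/-- Number of nonzero parts `ℓ(λ)`. -/
def Partition'.length (l : Partition') : ℕ := l.parts.support.card

/-- `ε_λ = 1 + (t−1) Σ_{k=1}^{ℓ(λ)} (q^{λ_k} − 1) t^{−k}`. -/
noncomputable def eps {K : Type*} [Field K] (q t : K) (l : Partition') : K :=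
  1 + (t - 1) * ∑ k ∈ Finset.range l.length, (q ^ (l.parts k) - 1) * (t ^ (k + 1))⁻¹

open Finset MvPolynomial

namespace Partition'

lemma ext_parts {l m : Partition'} (h : l.parts = m.parts) : l = m := by
  cases l; cases m; congr

lemma parts_eq_zero_of_length_le (l : Partition') {k : ℕ} (hk : l.length ≤ k) :
    l.parts k = 0 := by
  by_contra hne
  have hsub : range (k + 1) ⊆ l.parts.support := fun i hi => by
    have : l.parts k ≤ l.parts i := l.antitone (Nat.lt_succ_iff.mp (mem_range.mp hi))
    exact Finsupp.mem_support_iff.mpr (by omega)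
  have := card_le_card hsub
  rw [card_range] at this
  unfold length at hk
  omega

lemma sum_range_length_eq {M : Type*} [AddCommMonoid M] (l : Partition') {N : ℕ}
    (hN : l.length ≤ N) (g : ℕ → ℕ → M) (hg : ∀ k, g k 0 = 0) :
    ∑ k ∈ range l.length, g k (l.parts k) = ∑ k ∈ range N, g k (l.parts k) :=
  sum_subset (range_subset_range.mpr hN) fun k _ hk => by
    rw [l.parts_eq_zero_of_length_le (not_lt.mp (mem_range.not.mp hk)), hg]

end Partition'

lemma pow_mul_sub_one_eps {K : Type*} [Field K] (q : K) {t : K} (ht : t ≠ 0) (l : Partition')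
    {N : ℕ} (hN : l.length ≤ N) :
    t ^ N * (eps q t l - 1) = (t - 1) *
      (∑ k ∈ range N, q ^ l.parts k * t ^ (N - 1 - k) - ∑ k ∈ range N, t ^ (N - 1 - k)) := by
  rw [eps, l.sum_range_length_eq hN (fun k a => (q ^ a - 1) * (t ^ (k + 1))⁻¹) (fun _ => by simp),
    add_sub_cancel_left, mul_left_comm, mul_sum, ← sum_sub_distrib]
  congr 1
  refine sum_congr rfl fun k hk => ?_
  rw [← sub_one_mul, mul_left_comm, ← pow_sub₀ _ ht (by rw [mem_range] at hk; omega)]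
  congr 2
  omega

lemma Finsupp.single_zero_add_single_one_inj {a b c d : ℕ} :
    Finsupp.single (0 : Fin 2) a + Finsupp.single 1 b = Finsupp.single 0 c + Finsupp.single 1 d ↔
      a = c ∧ b = d := by
  refine ⟨fun h => ?_, by rintro ⟨rfl, rfl⟩; rfl⟩
  have h0 := DFunLike.congr_fun h 0
  have h1 := DFunLike.congr_fun h 1
  simp only [Finsupp.add_apply, Finsupp.single_apply] at h0 h1
  simp_all

lemma MvPolynomial.coeff_sum_X_pow_mul_X_pow {R : Type*} [CommSemiring R] (a e : ℕ → ℕ)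
    {N k : ℕ} (he : Set.InjOn e (range N)) (hk : k < N) (d : ℕ) :
    coeff (Finsupp.single 0 d + Finsupp.single 1 (e k))
        (∑ j ∈ range N, (X 0 ^ a j * X 1 ^ e j : MvPolynomial (Fin 2) R)) =
      if a k = d then 1 else 0 := by
  simp only [X_pow_eq_monomial, monomial_mul, one_mul, coeff_sum, coeff_monomial,
    Finsupp.single_zero_add_single_one_inj]
  rw [sum_eq_single k (fun j hj hjk => if_neg fun h => hjk (he hj (mem_range.mpr hk) h.2))
    (fun h => absurd (mem_range.mpr hk) h)]
  simp

lemma AlgebraicIndependent.eq_of_sum_pow_mul_pow_eq {R A : Type*} [CommRing R] [Nontrivial R]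
    [CommRing A] [Algebra R A] {x y : A} (h : AlgebraicIndependent R ![x, y]) {a b e : ℕ → ℕ}
    {N : ℕ} (he : Set.InjOn e (range N))
    (hab : ∑ j ∈ range N, x ^ a j * y ^ e j = ∑ j ∈ range N, x ^ b j * y ^ e j)
    {k : ℕ} (hk : k < N) : a k = b k := by
  have hP : (∑ j ∈ range N, X 0 ^ a j * X 1 ^ e j : MvPolynomial (Fin 2) R) =
      ∑ j ∈ range N, X 0 ^ b j * X 1 ^ e j :=
    h (by simpa [map_sum] using hab)
  have hc := congrArg (coeff (Finsupp.single 0 (a k) + Finsupp.single 1 (e k))) hP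
  rw [coeff_sum_X_pow_mul_X_pow a e he hk, coeff_sum_X_pow_mul_X_pow b e he hk, if_pos rfl] at hc
  by_contra hne
  exact one_ne_zero (hc.trans (if_neg (Ne.symm hne)))

/-- For generic `q, t` (algebraically independent over `ℚ`), the map
`λ ↦ ε_λ` is injective on the set of all partitions. -/
theorem eps_injective {K : Type*} [Field K] [CharZero K] (q t : K)
    (h : AlgebraicIndependent ℚ ![q, t]) :
    Function.Injective (eps q t) := by
  have ht : t ≠ 0 := fun h0 => h.transcendental 1 (by simp [h0, isAlgebraic_zero])
  have ht1 : t - 1 ≠ 0 := fun h1 =>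
    h.transcendental 1 (by simp [sub_eq_zero.mp h1, isAlgebraic_one])
  intro l m hlm
  set N := max l.length m.length
  have hsum : ∑ k ∈ range N, q ^ l.parts k * t ^ (N - 1 - k) =
      ∑ k ∈ range N, q ^ m.parts k * t ^ (N - 1 - k) := by
    have hl := pow_mul_sub_one_eps q ht l (le_max_left _ m.length)
    rw [hlm, pow_mul_sub_one_eps q ht m (le_max_right l.length _)] at hl
    exact (sub_left_inj.mp (mul_left_cancel₀ ht1 hl)).symm
  have he : Set.InjOn (fun k => N - 1 - k) (range N) := fun i hi j hj hij => by
    simp only [coe_range, Set.mem_Iio] at hi hj hij; omega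
  refine Partition'.ext_parts (Finsupp.ext fun k => ?_)
  rcases lt_or_ge k N with hk | hk
  · exact h.eq_of_sum_pow_mul_pow_eq he hsum hk
  · rw [l.parts_eq_zero_of_length_le (le_of_max_le_left hk),
      m.parts_eq_zero_of_length_le (le_of_max_le_right hk)]
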